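/- For 0 < α ≤ 1 and c > 0, if the maximum bucket size is ⌈K·log₂(n)/c⌉ and the table has n/α slots with at most n occupied so the load never exceeds α, then the per-bucket expected number of trials (1/(1−α))^{⌈K log₂ n/c⌉} is at most (1/(1−α))·n^{(K/c)·log₂(1/(1−α))}; summing over m = ⌈cn/log₂ n⌉ buckets gives total expected trials O(n^{1+(K/c)·log₂(1/(1−α))}). -/

import Mathlib

/-!
Write `b = 1/(1-α) > 1` and `t = K·log₂ n / c ≥ 0`. Rounding up costs at most one extra factor
of `b`, since `b^⌈t⌉ ≤ b^(t+1)`, and `b^t = n^{(K/c)·log₂ b}` because both equal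
`exp((K/c)·log₂ n·log b)`. The number of buckets `⌈c n / log₂ n⌉` is at most `(c+1) n` once
`log₂ n ≥ 1`, which contributes the extra factor `n`.
-/

open Real

lemma pow_natCeil_le_mul_rpow {b t : ℝ} (hb : 1 ≤ b) (ht : 0 ≤ t) :
    b ^ ⌈t⌉₊ ≤ b * b ^ t := by
  calc b ^ ⌈t⌉₊ = b ^ (⌈t⌉₊ : ℝ) := (rpow_natCast b _).symm
    _ ≤ b ^ (t + 1) := rpow_le_rpow_of_exponent_le hb (Nat.ceil_lt_add_one ht).le
    _ = b * b ^ t := by rw [rpow_add_one (by linarith)]; ring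

lemma rpow_mul_logb_comm {b x : ℝ} (hb : 0 < b) (hx : 0 < x) (k a : ℝ) :
    b ^ (k * logb a x) = x ^ (k * logb a b) := by
  rw [rpow_def_of_pos hb, rpow_def_of_pos hx, logb, logb]
  ring_nf

lemma natCeil_div_le_add_one {x L : ℝ} (hx : 0 ≤ x) (hL : 1 ≤ L) :
    (⌈x / L⌉₊ : ℝ) ≤ x + 1 := by
  have hxL : x / L ≤ x := div_le_self hx hL
  linarith [Nat.ceil_lt_add_one (div_nonneg hx (by linarith : (0 : ℝ) ≤ L))]

lemma one_le_logb_two_natCast {n : ℕ} (hn : 2 ≤ n) : 1 ≤ logb 2 n := by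
  rw [le_logb_iff_rpow_le one_lt_two (by positivity), rpow_one]
  exact_mod_cast hn

lemma one_le_one_div_one_sub {α : ℝ} (hα0 : 0 ≤ α) (hα1 : α < 1) : 1 ≤ 1 / (1 - α) := by
  rw [le_div_iff₀ (by linarith)]
  linarith

lemma pow_natCeil_logb_le {b c K : ℝ} (hb : 1 ≤ b) (hc : 0 ≤ c) (hK : 0 ≤ K)
    {n : ℕ} (hn : 2 ≤ n) :
    b ^ ⌈K * logb 2 n / c⌉₊ ≤ b * (n : ℝ) ^ ((K / c) * logb 2 b) := by
  have hlog : 0 ≤ logb 2 n := zero_le_one.trans (one_le_logb_two_natCast hn)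
  calc b ^ ⌈K * logb 2 n / c⌉₊ ≤ b * b ^ (K * logb 2 n / c) :=
        pow_natCeil_le_mul_rpow hb (by positivity)
    _ = b * b ^ ((K / c) * logb 2 n) := by rw [mul_div_right_comm]
    _ = b * (n : ℝ) ^ ((K / c) * logb 2 b) := by
        rw [rpow_mul_logb_comm (by linarith) (by positivity)]

/-- Quantitative core of the search-time theorem: with load factor cap α and
maximum bucket size ⌈K·log₂ n / c⌉, the per-bucket expected trials
(1/(1−α))^{⌈K·log₂ n/c⌉} are at most (1/(1−α))·n^{(K/c)·log₂(1/(1−α))}, and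
summing over m = ⌈cn/log₂ n⌉ buckets gives O(n^{1+(K/c)·log₂(1/(1−α))}). -/
theorem search_time_bound (α c K : ℝ) (hα0 : 0 < α) (hα1 : α < 1)
    (hc : 0 < c) (hK : 0 < K) :
    (∀ n : ℕ, 2 ≤ n →
      (1 / (1 - α)) ^ ⌈K * Real.logb 2 n / c⌉₊
        ≤ (1 / (1 - α)) * (n : ℝ) ^ ((K / c) * Real.logb 2 (1 / (1 - α)))) ∧
    ∃ C : ℝ, 0 < C ∧ ∀ n : ℕ, 2 ≤ n →
      (⌈c * n / Real.logb 2 n⌉₊ : ℝ) * (1 / (1 - α)) ^ ⌈K * Real.logb 2 n / c⌉₊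
        ≤ C * (n : ℝ) ^ (1 + (K / c) * Real.logb 2 (1 / (1 - α))) := by
  set b := 1 / (1 - α)
  have hb : 1 ≤ b := one_le_one_div_one_sub hα0.le hα1
  refine ⟨fun n hn ↦ pow_natCeil_logb_le hb hc.le hK.le hn, (c + 1) * b, by positivity, ?_⟩
  intro n hn
  have hn1 : (1 : ℝ) ≤ n := by exact_mod_cast one_le_two.trans hn
  have hbuckets : (⌈c * n / logb 2 n⌉₊ : ℝ) ≤ (c + 1) * n := by
    have := natCeil_div_le_add_one (by positivity : 0 ≤ c * n) (one_le_logb_two_natCast hn)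
    linarith
  calc (⌈c * n / logb 2 n⌉₊ : ℝ) * b ^ ⌈K * logb 2 n / c⌉₊
      ≤ ((c + 1) * n) * (b * (n : ℝ) ^ ((K / c) * logb 2 b)) :=
        mul_le_mul hbuckets (pow_natCeil_logb_le hb hc.le hK.le hn) (by positivity) (by positivity)
    _ = (c + 1) * b * (n : ℝ) ^ (1 + (K / c) * logb 2 b) := by
        rw [rpow_add (by positivity), rpow_one]; ring
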